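/- arXiv:2506.03311 — 2 statements merged into one kernel-verified Lean document; each statement's English description precedes it below -/
import Mathlib

section
/- Let · : ℝⁿ × ℝⁿ → ℝⁿ make (ℝⁿ, +, ·) a tubal ring, and suppose that for every a ∈ ℝⁿ the representation matrix R_a is diagonalizable over ℂ. Then there exists an invertible matrix M ∈ ℂ^{n×n} such that a·b = M⁻¹((Ma) ∘ (Mb)) for all a, b ∈ ℝⁿ, where ∘ denotes the entrywise product in ℂⁿ. -/
open Matrix

noncomputable section

/-- A real vector viewed as a complex vector. -/
def cvec {n : ℕ} (a : Fin n → ℝ) : Fin n → ℂ := fun i => (a i : ℂ)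

/-- A real matrix is diagonalizable over ℂ. -/
def DiagOverC {n : ℕ} (A : Matrix (Fin n) (Fin n) ℝ) : Prop :=
  ∃ (P : Matrix (Fin n) (Fin n) ℂ) (d : Fin n → ℂ), IsUnit P.det ∧
    A.map (fun x => (x : ℂ)) = P * Matrix.diagonal d * P⁻¹

/-- Two matrices with the same action by `mulVec` are equal. -/
lemma mulVec_ext_aux {n : ℕ} {K : Type*} [CommRing K] {A B : Matrix (Fin n) (Fin n) K}
    (h : ∀ x, A *ᵥ x = B *ᵥ x) : A = B := by
  ext i j
  have := congrFun (h (Pi.single j 1)) i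
  simpa [Matrix.mulVec_single] using this

/-- Complexification is compatible with `mulVec`. -/
lemma cvec_mulVec_aux {n : ℕ} (A : Matrix (Fin n) (Fin n) ℝ) (x : Fin n → ℝ) :
    cvec (A *ᵥ x) = A.map (fun r => (r : ℂ)) *ᵥ cvec x := by
  ext i
  simp only [cvec, Matrix.mulVec, dotProduct, Matrix.map_apply]
  push_cast
  rfl

/-- For a diagonalizable matrix, members of max generalized eigenspaces are true
eigenvectors. -/
lemma eig_of_maxGen_aux {n : ℕ} (A P : Matrix (Fin n) (Fin n) ℂ) (d : Fin n → ℂ)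
    (hP : IsUnit P.det) (hA : A = P * Matrix.diagonal d * P⁻¹) (μ : ℂ) (x : Fin n → ℂ)
    (hx : x ∈ Module.End.maxGenEigenspace (Matrix.toLinAlgEquiv' A) μ) :
    A *ᵥ x = μ • x := by
  classical
  obtain ⟨k, hk⟩ := (Module.End.mem_maxGenEigenspace _ _ _).mp hx
  -- pass to exponent k+1
  have hk1 : (((Matrix.toLinAlgEquiv' A) - μ • 1) ^ (k + 1)) x = 0 := by
    rw [pow_succ', Module.End.mul_apply, hk, map_zero]
  have hsmul1 : (Matrix.toLinAlgEquiv' (μ • (1 : Matrix (Fin n) (Fin n) ℂ)) :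
      Module.End ℂ (Fin n → ℂ)) = μ • 1 := by
    rw [← Algebra.algebraMap_eq_smul_one, AlgEquiv.commutes, Algebra.algebraMap_eq_smul_one]
  have hconv : ((Matrix.toLinAlgEquiv' A) - μ • (1 : Module.End ℂ (Fin n → ℂ))) ^ (k + 1)
      = Matrix.toLinAlgEquiv' ((A - μ • 1) ^ (k + 1)) := by
    rw [map_pow, map_sub, hsmul1]
  -- conjugation identity
  have hPinv : P * P⁻¹ = 1 := Matrix.mul_nonsing_inv _ hP
  have hPinv' : P⁻¹ * P = 1 := Matrix.nonsing_inv_mul _ hP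
  have hsub : A - μ • 1 = P * Matrix.diagonal (fun i => d i - μ) * P⁻¹ := by
    have h1 : (μ • (1 : Matrix (Fin n) (Fin n) ℂ)) = P * (μ • 1) * P⁻¹ := by
      rw [Matrix.mul_smul, Matrix.mul_one, Matrix.smul_mul, hPinv]
    rw [hA, h1, ← Matrix.sub_mul, ← Matrix.mul_sub]
    congr 2
    ext i j
    by_cases hij : i = j <;> simp [Matrix.diagonal, Matrix.one_apply, hij, Matrix.smul_apply]
  have hpow : ∀ m : ℕ, (A - μ • 1) ^ m = P * Matrix.diagonal (fun i => (d i - μ) ^ m) * P⁻¹ := by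
    intro m
    induction m with
    | zero => simp [hPinv]
    | succ m ih =>
      have h2 : (Matrix.diagonal fun i => (d i - μ) ^ m) * (P⁻¹ * P) *
          (Matrix.diagonal fun i => d i - μ) =
          Matrix.diagonal fun i => (d i - μ) ^ (m + 1) := by
        rw [hPinv', Matrix.mul_one, Matrix.diagonal_mul_diagonal]
        simp [pow_succ]
      rw [pow_succ, ih, hsub,
        show P * (Matrix.diagonal fun i => (d i - μ) ^ m) * P⁻¹ *
          (P * (Matrix.diagonal fun i => d i - μ) * P⁻¹)
          = P * ((Matrix.diagonal fun i => (d i - μ) ^ m) * (P⁻¹ * P) *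
            (Matrix.diagonal fun i => d i - μ)) * P⁻¹ by
          simp only [Matrix.mul_assoc], h2]
  -- extract coordinates
  have hky : ∀ i, (d i - μ) ^ (k + 1) * (P⁻¹ *ᵥ x) i = 0 := by
    have h0 : ((A - μ • 1) ^ (k + 1)) *ᵥ x = 0 := by
      rw [hconv] at hk1
      rw [← Matrix.toLinAlgEquiv'_apply]
      exact hk1
    rw [hpow (k + 1)] at h0
    have h1 : P⁻¹ *ᵥ ((P * Matrix.diagonal (fun i => (d i - μ) ^ (k + 1)) * P⁻¹) *ᵥ x) = 0 := by
      rw [h0, Matrix.mulVec_zero]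
    rw [← Matrix.mulVec_mulVec, ← Matrix.mulVec_mulVec, Matrix.mulVec_mulVec,
      hPinv', Matrix.one_mulVec] at h1
    intro i
    have := congrFun h1 i
    simpa [Matrix.mulVec_diagonal] using this
  have hy1 : ∀ i, (d i - μ) * (P⁻¹ *ᵥ x) i = 0 := by
    intro i
    rcases mul_eq_zero.mp (hky i) with h | h
    · rw [pow_eq_zero_iff (Nat.succ_ne_zero k)] at h
      rw [h, zero_mul]
    · rw [h, mul_zero]
  have hfin : (A - μ • 1) *ᵥ x = 0 := by
    have h1 : (A - μ • 1) ^ 1 *ᵥ x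
        = P *ᵥ (Matrix.diagonal (fun i => (d i - μ) ^ 1) *ᵥ (P⁻¹ *ᵥ x)) := by
      rw [hpow 1, ← Matrix.mulVec_mulVec, ← Matrix.mulVec_mulVec]
    rw [pow_one] at h1
    rw [h1]
    have h2 : Matrix.diagonal (fun i => (d i - μ) ^ 1) *ᵥ (P⁻¹ *ᵥ x) = 0 := by
      ext i
      simpa [Matrix.mulVec_diagonal, pow_one] using hy1 i
    rw [h2, Matrix.mulVec_zero]
  have h2 : A *ᵥ x - μ • x = 0 := by
    rw [Matrix.sub_mulVec, Matrix.smul_mulVec, Matrix.one_mulVec] at hfin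
    exact hfin
  exact sub_eq_zero.mp h2

/-- A diagonalizable matrix has spanning generalized eigenspaces. -/
lemma maxGen_span_aux {n : ℕ} (A : Matrix (Fin n) (Fin n) ℂ)
    (h : ∃ (P : Matrix (Fin n) (Fin n) ℂ) (d : Fin n → ℂ), IsUnit P.det ∧
      A = P * Matrix.diagonal d * P⁻¹) :
    ⨆ μ, Module.End.maxGenEigenspace (Matrix.toLinAlgEquiv' A) μ = ⊤ := by
  classical
  obtain ⟨P, d, hP, hA⟩ := h
  rw [eq_top_iff]
  intro x _
  have hPinv : P * P⁻¹ = 1 := Matrix.mul_nonsing_inv _ hP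
  have hx : x = ∑ k, (P⁻¹ *ᵥ x) k • (fun i => P i k) := by
    have h1 : P *ᵥ (P⁻¹ *ᵥ x) = x := by
      rw [Matrix.mulVec_mulVec, hPinv, Matrix.one_mulVec]
    conv_lhs => rw [← h1]
    ext i
    simp [Matrix.mulVec, dotProduct, Finset.sum_apply, mul_comm]
  rw [hx]
  refine Submodule.sum_mem _ fun k _ => ?_
  refine Submodule.mem_iSup_of_mem (d k) (Submodule.smul_mem _ _ ?_)
  rw [Module.End.mem_maxGenEigenspace]
  refine ⟨1, ?_⟩
  rw [pow_one]
  have hcol : A *ᵥ (fun i => P i k) = d k • (fun i => P i k) := by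
    have hc : (fun i => P i k) = P *ᵥ Pi.single k 1 := by
      ext i; simp [Matrix.mulVec_single]
    have hd : Matrix.diagonal d *ᵥ Pi.single k (1 : ℂ) = d k • (Pi.single k 1 : Fin n → ℂ) := by
      rw [Matrix.diagonal_mulVec_single]
      ext i
      by_cases hik : i = k <;> simp [Pi.single_apply, hik]
    rw [hc, Matrix.mulVec_mulVec, hA,
      show P * Matrix.diagonal d * P⁻¹ * P = P * Matrix.diagonal d by
        rw [Matrix.mul_assoc, Matrix.nonsing_inv_mul _ hP, Matrix.mul_one],
      ← Matrix.mulVec_mulVec, hd, Matrix.mulVec_smul]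
  simp only [LinearMap.sub_apply, LinearMap.smul_apply, Module.End.one_apply,
    Matrix.toLinAlgEquiv'_apply]
  rw [hcol, sub_self]

/-- a tubal ring whose representation matrices are all diagonalizable
over ℂ is a `★_M`-ring for some invertible `M ∈ ℂ^{n×n}`. -/
theorem stmt18 {n : ℕ}
    (mul : (Fin n → ℝ) → (Fin n → ℝ) → (Fin n → ℝ))
    (hadd_left : ∀ a b c, mul (a + b) c = mul a c + mul b c)
    (hadd_right : ∀ a b c, mul a (b + c) = mul a b + mul a c)
    (hsmul_left : ∀ (r : ℝ) (a b : Fin n → ℝ), mul (r • a) b = r • mul a b)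
    (hsmul_right : ∀ (r : ℝ) (a b : Fin n → ℝ), mul a (r • b) = r • mul a b)
    (hcomm : ∀ a b, mul a b = mul b a)
    (hassoc : ∀ a b c, mul (mul a b) c = mul a (mul b c))
    (e : Fin n → ℝ) (hunit : ∀ a, mul e a = a)
    (hvnr : ∀ a, ∃ x, mul (mul a x) a = a)
    (R : (Fin n → ℝ) → Matrix (Fin n) (Fin n) ℝ)
    (hR : ∀ a x, R a *ᵥ x = mul a x)
    (hdiag : ∀ a : Fin n → ℝ, DiagOverC (R a)) :
    ∃ M : Matrix (Fin n) (Fin n) ℂ, IsUnit M.det ∧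
      ∀ a b : Fin n → ℝ,
        cvec (mul a b) = M⁻¹ *ᵥ ((M *ᵥ cvec a) * (M *ᵥ cvec b)) := by
  classical
  -- complexified representation matrices
  set Ac : (Fin n → ℝ) → Matrix (Fin n) (Fin n) ℂ :=
    fun a => (R a).map (fun r => (r : ℂ)) with hAc
  -- basic properties of R
  have hRmul : ∀ a b, R (mul a b) = R a * R b := by
    intro a b
    apply mulVec_ext_aux
    intro x
    rw [hR, ← Matrix.mulVec_mulVec, hR, hR, hassoc]
  have hRone : R e = 1 := by
    apply mulVec_ext_aux
    intro x
    rw [hR, hunit, Matrix.one_mulVec]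
  have hAcmul : ∀ a b, Ac (mul a b) = Ac a * Ac b := by
    intro a b
    rw [hAc]
    simp only
    rw [hRmul]
    exact Matrix.map_mul (f := Complex.ofRealHom)
  have hAcone : Ac e = 1 := by
    rw [hAc]; simp only; rw [hRone]
    exact Matrix.map_one _ Complex.ofRealHom.map_zero Complex.ofRealHom.map_one
  -- the commuting family of endomorphisms
  set f : (Fin n → ℝ) → Module.End ℂ (Fin n → ℂ) :=
    fun a => Matrix.toLinAlgEquiv' (Ac a) with hf
  have hcommf : Pairwise fun a b => Commute (f a) (f b) := by
    intro a b _
    show f a * f b = f b * f a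
    rw [hf]
    simp only
    rw [← _root_.map_mul, ← _root_.map_mul, ← hAcmul, ← hAcmul, hcomm]
  have hdiagf : ∀ a, ∃ (P : Matrix (Fin n) (Fin n) ℂ) (d : Fin n → ℂ), IsUnit P.det ∧
      Ac a = P * Matrix.diagonal d * P⁻¹ := fun a => hdiag a
  have hspanf : ∀ a, ⨆ μ, Module.End.maxGenEigenspace (f a) μ = ⊤ := by
    intro a
    exact maxGen_span_aux (Ac a) (hdiagf a)
  -- simultaneous triangularization
  have htop := Module.End.iSup_iInf_maxGenEigenspace_eq_top_of_iSup_maxGenEigenspace_eq_top_of_commute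
    f hcommf hspanf
  -- extract a simultaneous eigenbasis
  set E : ((Fin n → ℝ) → ℂ) → Submodule ℂ (Fin n → ℂ) :=
    fun χ => ⨅ a, Module.End.maxGenEigenspace (f a) (χ a) with hE
  have hspan : Submodule.span ℂ (⋃ χ, (E χ : Set (Fin n → ℂ))) = ⊤ := by
    rw [Submodule.span_iUnion]
    simp_rw [Submodule.span_eq]
    exact htop
  obtain ⟨s, hs_sub, hs_span, hs_li⟩ :=
    exists_linearIndependent ℂ (⋃ χ, (E χ : Set (Fin n → ℂ)))
  have hs_top : ⊤ ≤ Submodule.span ℂ (Set.range ((↑) : s → (Fin n → ℂ))) := by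
    rw [Subtype.range_coe, hs_span, hspan]
  let b0 : Module.Basis s ℂ (Fin n → ℂ) := Module.Basis.mk hs_li hs_top
  let eqv : s ≃ Fin n := b0.indexEquiv (Pi.basisFun ℂ (Fin n))
  let bb : Module.Basis (Fin n) ℂ (Fin n → ℂ) := b0.reindex eqv
  -- each basis vector is a simultaneous eigenvector
  have hbb_mem : ∀ k, ∃ χ : (Fin n → ℝ) → ℂ, ∀ a, (bb k) ∈
      Module.End.maxGenEigenspace (f a) (χ a) := by
    intro k
    have h1 : bb k = (b0 (eqv.symm k) : Fin n → ℂ) := by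
      simp [bb, Module.Basis.reindex_apply]
    have h2 : (b0 (eqv.symm k) : Fin n → ℂ) ∈ ⋃ χ, (E χ : Set (Fin n → ℂ)) := by
      rw [show (b0 (eqv.symm k) : Fin n → ℂ) = ((eqv.symm k : s) : Fin n → ℂ) by
        simp [b0, Module.Basis.mk_apply]]
      exact hs_sub (eqv.symm k).2
    rw [← h1] at h2
    obtain ⟨_, ⟨χ, rfl⟩, hmem⟩ := h2
    exact ⟨χ, fun a => (Submodule.mem_iInf _).mp hmem a⟩
  choose χf hχf using hbb_mem
  -- eigenvector equation
  have heig : ∀ (a : Fin n → ℝ) (k : Fin n), Ac a *ᵥ bb k = χf k a • bb k := by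
    intro a k
    obtain ⟨P, d, hP, hA⟩ := hdiagf a
    exact eig_of_maxGen_aux (Ac a) P d hP hA (χf k a) (bb k) (hχf k a)
  have hbb_ne : ∀ k, bb k ≠ 0 := fun k => bb.ne_zero k
  -- eigenvalues are multiplicative
  have hlam_mul : ∀ (a b : Fin n → ℝ) (k : Fin n),
      χf k (mul a b) = χf k a * χf k b := by
    intro a b k
    have h1 : Ac (mul a b) *ᵥ bb k = (χf k a * χf k b) • bb k := by
      rw [hAcmul, ← Matrix.mulVec_mulVec, heig, Matrix.mulVec_smul, heig, smul_smul,
        mul_comm (χf k b)]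
    rw [heig] at h1
    exact smul_left_injective ℂ (hbb_ne k) h1
  -- coordinates
  have hcvec_mul : ∀ a x, cvec (mul a x) = Ac a *ᵥ cvec x := by
    intro a x
    rw [← hR]
    exact cvec_mulVec_aux (R a) x
  set c : Fin n → ℂ := fun k => bb.repr (cvec e) k with hc
  have hw : ∀ (a : Fin n → ℝ) (k : Fin n), bb.repr (cvec a) k = χf k a * c k := by
    intro a k
    have h1 : cvec a = Ac a *ᵥ cvec e := by
      rw [← hcvec_mul a e, hcomm, hunit]
    have h2 : cvec e = ∑ j, c j • bb j := by
      rw [hc]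
      exact (bb.sum_repr (cvec e)).symm
    have h3 : cvec a = ∑ j, (χf j a * c j) • bb j := by
      rw [h1, h2, ← Matrix.mulVecLin_apply, map_sum]
      refine Finset.sum_congr rfl fun j _ => ?_
      rw [LinearMap.map_smul, Matrix.mulVecLin_apply, heig, smul_smul, mul_comm (c j)]
    rw [h3, map_sum]
    simp only [_root_.map_smul, Finsupp.coe_finset_sum, Finsupp.coe_smul, Finset.sum_apply,
      Pi.smul_apply, Module.Basis.repr_self, smul_eq_mul, Finsupp.single_apply]
    rw [Finset.sum_eq_single k]
    · simp
    · intro j _ hjk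
      simp [hjk]
    · intro hk
      exact absurd (Finset.mem_univ k) hk
  -- the coordinates of the unit are nonzero
  have hcvec_single : ∀ j : Fin n, cvec (Pi.single j 1) = Pi.single j (1 : ℂ) := by
    intro j
    ext i
    by_cases hij : i = j <;> simp [cvec, Pi.single_apply, hij]
  have hc_ne : ∀ k, c k ≠ 0 := by
    intro k hk0
    have hz : ∀ z : Fin n → ℂ, bb.repr z k = 0 := by
      intro z
      have hzdecomp : z = ∑ j, z j • cvec (Pi.single j 1) := by
        ext i
        rw [Finset.sum_apply]
        simp_rw [hcvec_single]
        simp [Pi.single_apply, Finset.sum_ite_eq]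
      rw [hzdecomp, map_sum]
      simp only [Finsupp.coe_finset_sum, Finset.sum_apply]
      refine Finset.sum_eq_zero fun j _ => ?_
      rw [_root_.map_smul]
      simp only [Finsupp.coe_smul, Pi.smul_apply, smul_eq_mul]
      rw [hw (Pi.single j 1) k, hk0, mul_zero, mul_zero]
    have := hz (bb k)
    rw [Module.Basis.repr_self] at this
    simp at this
  -- the change of basis matrix
  set Q : Matrix (Fin n) (Fin n) ℂ := (Pi.basisFun ℂ (Fin n)).toMatrix bb with hQ
  have hQinv : Invertible Q := (Pi.basisFun ℂ (Fin n)).invertibleToMatrix bb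
  have hQdet : IsUnit Q.det := @Matrix.isUnit_det_of_invertible _ _ _ _ _ Q hQinv
  have hQrepr : ∀ z : Fin n → ℂ, Q *ᵥ (fun k => bb.repr z k) = z := by
    intro z
    have h1 := Module.Basis.toMatrix_mulVec_repr (b := bb) (b' := Pi.basisFun ℂ (Fin n)) z
    have h2 : ⇑((Pi.basisFun ℂ (Fin n)).repr z) = z := by
      ext i
      simp [Pi.basisFun_repr]
    rw [hQ]
    calc (Pi.basisFun ℂ (Fin n)).toMatrix bb *ᵥ (fun k => bb.repr z k)
        = (Pi.basisFun ℂ (Fin n)).toMatrix bb *ᵥ ⇑(bb.repr z) := rfl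
      _ = ⇑((Pi.basisFun ℂ (Fin n)).repr z) := h1
      _ = z := h2
  have hQinv_vec : ∀ z : Fin n → ℂ, Q⁻¹ *ᵥ z = fun k => bb.repr z k := by
    intro z
    conv_lhs => rw [← hQrepr z]
    rw [Matrix.mulVec_mulVec, Matrix.nonsing_inv_mul _ hQdet, Matrix.one_mulVec]
  -- the final matrix
  refine ⟨Matrix.diagonal (fun k => (c k)⁻¹) * Q⁻¹, ?_, ?_⟩
  · rw [Matrix.det_mul, Matrix.det_diagonal]
    refine IsUnit.mul (isUnit_iff_ne_zero.mpr ?_) (Matrix.isUnit_nonsing_inv_det _ hQdet)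
    exact Finset.prod_ne_zero_iff.mpr fun k _ => inv_ne_zero (hc_ne k)
  · intro a b
    set M : Matrix (Fin n) (Fin n) ℂ := Matrix.diagonal (fun k => (c k)⁻¹) * Q⁻¹ with hM
    have hMdet : IsUnit M.det := by
      rw [hM, Matrix.det_mul, Matrix.det_diagonal]
      refine IsUnit.mul (isUnit_iff_ne_zero.mpr ?_) (Matrix.isUnit_nonsing_inv_det _ hQdet)
      exact Finset.prod_ne_zero_iff.mpr fun k _ => inv_ne_zero (hc_ne k)
    have hMvec : ∀ x : Fin n → ℝ, M *ᵥ cvec x = fun k => χf k x := by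
      intro x
      rw [hM, ← Matrix.mulVec_mulVec, hQinv_vec]
      ext k
      rw [Matrix.mulVec_diagonal, hw, mul_comm (χf k x) (c k), ← mul_assoc,
        inv_mul_cancel₀ (hc_ne k), one_mul]
    have hkey : M *ᵥ cvec (mul a b) = (M *ᵥ cvec a) * (M *ᵥ cvec b) := by
      rw [hMvec, hMvec, hMvec]
      ext k
      simp [hlam_mul a b k]
    rw [← hkey, Matrix.mulVec_mulVec, Matrix.nonsing_inv_mul _ hMdet, Matrix.one_mulVec]
end
end

section
/- Let · : ℝⁿ × ℝⁿ → ℝⁿ make (ℝⁿ, +, ·) a tubal ring with unit e. Then there exist N ≥ 1 and idempotent elements p₁, …, p_N ∈ ℝⁿ (pⱼ·pⱼ = pⱼ) such that ℝⁿ is the internal direct sum of the principal ideals (p₁), …, (p_N), where (pⱼ) := { x·pⱼ : x ∈ ℝⁿ }, and each (pⱼ) is a field under + and ·: pⱼ is a unit for (pⱼ), and every nonzero a ∈ (pⱼ) has an inverse b ∈ (pⱼ) with a·b = pⱼ. -/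
open Matrix

noncomputable section

/-- The conclusion predicate, for a general commutative ring. -/
def TubalPred (R : Type*) [CommRing R] : Prop :=
  ∃ (N : ℕ), 1 ≤ N ∧ ∃ p : Fin N → R,
    (∀ j, p j * p j = p j) ∧
    (∀ a : R, ∃! f : Fin N → R, (∀ j, ∃ y, f j = y * p j) ∧ a = ∑ j, f j) ∧
    (∀ j, ∀ x : R, (∃ y, x = y * p j) → p j * x = x) ∧
    (∀ j, ∀ a : R, (∃ y, a = y * p j) → a ≠ 0 →
      ∃ b : R, (∃ y, b = y * p j) ∧ a * b = p j)

theorem TubalPred.transfer {R S : Type*} [CommRing R] [CommRing S] (φ : R ≃+* S)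
    (h : TubalPred S) : TubalPred R := by
  obtain ⟨N, hN, p, hidem, hdec, hunit, hinv⟩ := h
  refine ⟨N, hN, fun j => φ.symm (p j), ?_, ?_, ?_, ?_⟩
  · intro j
    apply φ.injective
    simp only [_root_.map_mul, RingEquiv.apply_symm_apply, hidem j]
  · intro a
    obtain ⟨g, ⟨hg1, hg2⟩, hg3⟩ := hdec (φ a)
    refine ⟨fun j => φ.symm (g j), ⟨?_, ?_⟩, ?_⟩
    · intro j
      obtain ⟨y, hy⟩ := hg1 j
      exact ⟨φ.symm y, by simp only [hy, _root_.map_mul]⟩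
    · apply φ.injective
      rw [map_sum]
      simpa using hg2
    · intro f ⟨hf1, hf2⟩
      have key := hg3 (fun j => φ (f j)) ⟨fun j => by
        obtain ⟨y, hy⟩ := hf1 j
        exact ⟨φ y, by simp only [hy, _root_.map_mul, RingEquiv.apply_symm_apply]⟩,
        by rw [hf2, map_sum]⟩
      funext j
      have := congrFun key j
      simpa using congrArg φ.symm this
  · intro j x ⟨y, hy⟩
    apply φ.injective
    simp only [_root_.map_mul, RingEquiv.apply_symm_apply]
    exact hunit j (φ x) ⟨φ y, by simp only [hy, _root_.map_mul, RingEquiv.apply_symm_apply]⟩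
  · intro j a ⟨y, hy⟩ ha
    obtain ⟨b, ⟨z, hz⟩, hb⟩ := hinv j (φ a)
      ⟨φ y, by simp only [hy, _root_.map_mul, RingEquiv.apply_symm_apply]⟩
      (fun h0 => ha (φ.injective (by rw [h0, map_zero])))
    refine ⟨φ.symm b, ⟨φ.symm z, by simp only [hz, _root_.map_mul]⟩, ?_⟩
    apply φ.injective
    simp only [_root_.map_mul, RingEquiv.apply_symm_apply, hb]

theorem TubalPred.pi {ι : Type*} [Fintype ι] [Nonempty ι] (K : ι → Type*)
    [∀ i, CommRing (K i)]
    (hinvex : ∀ i (x : K i), x ≠ 0 → ∃ y : K i, x * y = 1) :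
    TubalPred (∀ i, K i) := by
  classical
  set N := Fintype.card ι with hNdef
  have hN : 1 ≤ N := Fintype.card_pos
  set eqv : Fin N ≃ ι := (Fintype.equivFin ι).symm with heqv
  set p : Fin N → (∀ i, K i) := fun j => Pi.single (eqv j) 1 with hp
  have hpapp : ∀ j i, p j i = if i = eqv j then 1 else 0 := by
    intro j i
    by_cases h : i = eqv j
    · subst h; simp [hp]
    · simp [hp, Pi.single_apply, h]
  have memid : ∀ (j) (x : ∀ i, K i), (∃ y, x = y * p j) ↔
      ∀ i, i ≠ eqv j → x i = 0 := by
    intro j x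
    constructor
    · rintro ⟨y, rfl⟩ i hi
      simp [Pi.mul_apply, hpapp, hi]
    · intro hx
      refine ⟨x, ?_⟩
      funext i
      by_cases h : i = eqv j
      · simp [Pi.mul_apply, hpapp, h]
      · simp [Pi.mul_apply, hpapp, h, hx i h]
  refine ⟨N, hN, p, ?_, ?_, ?_, ?_⟩
  · intro j
    funext i
    by_cases h : i = eqv j <;> simp [Pi.mul_apply, hpapp, h]
  · intro a
    refine ⟨fun j => Pi.single (eqv j) (a (eqv j)), ⟨?_, ?_⟩, ?_⟩
    · intro j
      rw [memid]
      intro i hi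
      simp [Pi.single_apply, hi]
    · funext i
      obtain ⟨j0, rfl⟩ : ∃ j0, i = eqv j0 := ⟨eqv.symm i, (eqv.apply_symm_apply i).symm⟩
      rw [Finset.sum_apply]
      rw [Finset.sum_eq_single j0]
      · simp
      · intro j _ hj
        apply Pi.single_eq_of_ne
        exact fun hh => hj (eqv.injective hh).symm
      · intro h; exact absurd (Finset.mem_univ _) h
    · intro f ⟨hf1, hf2⟩
      funext j
      funext i
      by_cases h : i = eqv j
      · subst h
        have hsum : a (eqv j) = ∑ j', f j' (eqv j) := by rw [hf2, Finset.sum_apply]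
        rw [Finset.sum_eq_single j] at hsum
        · simp [hsum]
        · intro j' _ hj'
          exact ((memid j' (f j')).mp (hf1 j')) (eqv j) (fun h => hj' (eqv.injective h.symm))
        · intro h; exact absurd (Finset.mem_univ _) h
      · rw [((memid j (f j)).mp (hf1 j)) i h]
        simp [Pi.single_apply, h]
  · intro j x hx
    funext i
    by_cases h : i = eqv j
    · simp [Pi.mul_apply, hpapp, h]
    · simp [Pi.mul_apply, hpapp, h, ((memid j x).mp hx) i h]
  · intro j a ha ha0
    have hane : a (eqv j) ≠ 0 := by
      intro h
      apply ha0
      funext i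
      by_cases hi : i = eqv j
      · subst hi; exact h
      · exact ((memid j a).mp ha) i hi
    obtain ⟨y, hy⟩ := hinvex (eqv j) (a (eqv j)) hane
    refine ⟨Pi.single (eqv j) y, ?_, ?_⟩
    · rw [memid]
      intro i hi
      simp [Pi.single_apply, hi]
    · funext i
      by_cases h : i = eqv j
      · subst h
        simp [Pi.mul_apply, hpapp, hy]
      · simp [Pi.mul_apply, hpapp, Pi.single_apply, h]

theorem TubalPred.of_artinian (R : Type*) [CommRing R] [IsArtinianRing R]
    (hvnr : ∀ a : R, ∃ x, a * x * a = a) : TubalPred R := by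
  classical
  cases subsingleton_or_nontrivial R with
  | inl h =>
    refine ⟨1, le_refl 1, fun _ => 0, ?_, ?_, ?_, ?_⟩
    · intro j; exact Subsingleton.elim _ _
    · intro a
      exact ⟨fun _ => 0, ⟨fun j => ⟨0, Subsingleton.elim _ _⟩, Subsingleton.elim _ _⟩,
        fun f _ => funext fun j => Subsingleton.elim _ _⟩
    · intro j x _; exact Subsingleton.elim _ _
    · intro j a _ ha; exact absurd (Subsingleton.elim a 0) ha
  | inr h =>
    have hred : IsReduced R := by
      constructor
      intro a ⟨k, hk⟩
      obtain ⟨x, hx⟩ := hvnr a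
      have key : ∀ m : ℕ, a = a ^ (m + 1) * x ^ m := by
        intro m
        induction m with
        | zero => simp
        | succ m ih =>
          calc a = a * x * a := hx.symm
          _ = (a ^ (m + 1) * x ^ m) * x * a := by rw [← ih]
          _ = a ^ (m + 1) * a * (x ^ m * x) := by ring
          _ = a ^ (m + 1 + 1) * x ^ (m + 1) := by ring
      have hkey := key k
      rw [pow_succ, hk, zero_mul, zero_mul] at hkey
      exact hkey
    haveI : Finite (MaximalSpectrum R) := inferInstance
    haveI : Fintype (MaximalSpectrum R) := Fintype.ofFinite _
    haveI : Nonempty (MaximalSpectrum R) := by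
      obtain ⟨I, hI⟩ := Ideal.exists_maximal R
      exact ⟨⟨I, hI⟩⟩
    refine TubalPred.transfer (IsArtinianRing.equivPi R).toRingEquiv (TubalPred.pi _ ?_)
    intro I x hx
    haveI : I.asIdeal.IsMaximal := I.isMaximal
    letI : Field (R ⧸ I.asIdeal) := Ideal.Quotient.field I.asIdeal
    exact ⟨x⁻¹, mul_inv_cancel₀ hx⟩

/-- every tubal ring `(ℝⁿ, +, ·)` decomposes as an internal direct sum
of principal ideals `(p₁), …, (p_N)` generated by idempotents, each of which is a
field (with unit `pⱼ`). -/
theorem stmt19 {n : ℕ}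
    (mul : (Fin n → ℝ) → (Fin n → ℝ) → (Fin n → ℝ))
    (hadd_left : ∀ a b c, mul (a + b) c = mul a c + mul b c)
    (hadd_right : ∀ a b c, mul a (b + c) = mul a b + mul a c)
    (hsmul_left : ∀ (r : ℝ) (a b : Fin n → ℝ), mul (r • a) b = r • mul a b)
    (hsmul_right : ∀ (r : ℝ) (a b : Fin n → ℝ), mul a (r • b) = r • mul a b)
    (hcomm : ∀ a b, mul a b = mul b a)
    (hassoc : ∀ a b c, mul (mul a b) c = mul a (mul b c))
    (e : Fin n → ℝ) (hunit : ∀ a, mul e a = a)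
    (hvnr : ∀ a, ∃ x, mul (mul a x) a = a) :
    ∃ (N : ℕ), 1 ≤ N ∧ ∃ p : Fin N → (Fin n → ℝ),
      (∀ j, mul (p j) (p j) = p j) ∧
      (∀ a : Fin n → ℝ, ∃! f : Fin N → (Fin n → ℝ),
        (∀ j, ∃ y, f j = mul y (p j)) ∧ a = ∑ j, f j) ∧
      (∀ j, ∀ x : Fin n → ℝ, (∃ y, x = mul y (p j)) → mul (p j) x = x) ∧
      (∀ j, ∀ a : Fin n → ℝ, (∃ y, a = mul y (p j)) → a ≠ 0 →
        ∃ b : Fin n → ℝ, (∃ y, b = mul y (p j)) ∧ mul a b = p j) := by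
  have hzero_left : ∀ b, mul 0 b = 0 := by
    intro b
    have : mul ((0 : ℝ) • (0 : Fin n → ℝ)) b = (0 : ℝ) • mul 0 b := hsmul_left 0 0 b
    simpa using this
  have hzero_right : ∀ b, mul b 0 = 0 := fun b => by rw [hcomm]; exact hzero_left b
  let ringI : CommRing (Fin n → ℝ) :=
    { (inferInstance : AddCommGroup (Fin n → ℝ)) with
      mul := mul
      npow := @npowRec _ ⟨e⟩ ⟨mul⟩
      npow_zero := fun _ => rfl
      npow_succ := fun _ _ => rfl
      mul_assoc := hassoc
      one := e
      one_mul := hunit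
      mul_one := fun a => by show mul a e = a; rw [hcomm]; exact hunit a
      left_distrib := hadd_right
      right_distrib := hadd_left
      zero_mul := hzero_left
      mul_zero := hzero_right
      mul_comm := hcomm
      natCast := fun k => (k : ℝ) • e
      natCast_zero := by show ((0:ℕ):ℝ) • e = 0; simp
      natCast_succ := fun k => by
        show ((k+1 : ℕ) : ℝ) • e = ((k:ℕ):ℝ) • e + e
        push_cast; rw [add_smul, one_smul]
      intCast := fun k => (k : ℝ) • e
      intCast_ofNat := fun k => by show (((k:ℕ):ℤ):ℝ) • e = ((k:ℕ):ℝ) • e; norm_num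
      intCast_negSucc := fun k => by
        show ((Int.negSucc k : ℤ):ℝ) • e = -(((k+1:ℕ):ℝ) • e)
        rw [Int.cast_negSucc]; push_cast; rw [neg_smul] }
  let modI : @Module ℝ (Fin n → ℝ) Real.semiring
      (@AddCommGroup.toAddCommMonoid _ ringI.toAddCommGroup) := by
    exact (inferInstance : Module ℝ (Fin n → ℝ))
  let algI : @Algebra ℝ (Fin n → ℝ) Real.instCommSemiring ringI.toSemiring :=
    @Algebra.ofModule ℝ (Fin n → ℝ) _ ringI.toSemiring modI
      (fun r x y => by exact hsmul_left r x y)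
      (fun r x y => by exact hsmul_right r x y)
  have finI : @Module.Finite ℝ (Fin n → ℝ) Real.semiring
      (@AddCommGroup.toAddCommMonoid _ ringI.toAddCommGroup) modI := by
    exact (inferInstance : Module.Finite ℝ (Fin n → ℝ))
  have finI' : @Module.Finite ℝ (Fin n → ℝ) Real.semiring
      (@AddCommGroup.toAddCommMonoid _ ringI.toAddCommGroup)
      (@Algebra.toModule ℝ _ _ ringI.toSemiring algI) := by
    exact finI
  have artI : @IsArtinianRing (Fin n → ℝ) ringI.toSemiring :=
    @IsArtinianRing.of_finite ℝ (Fin n → ℝ) _ ringI.toRing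
      (@Algebra.toModule ℝ _ _ ringI.toSemiring algI)
      (@IsScalarTower.right ℝ _ _ ringI.toSemiring algI)
      (inferInstance : IsArtinianRing ℝ) finI'
  have h := @TubalPred.of_artinian (Fin n → ℝ) ringI artI
    (fun a => by exact hvnr a)
  obtain ⟨N, hN, p, h1, h2, h3, h4⟩ := h
  exact ⟨N, hN, p, h1, h2, h3, h4⟩
end
end
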